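/- Let A = M + Λ ⊆ ℝ³ be a periodic point set with unit cell U, and let k ≥ 1. Then the probability that a uniformly random point of U lies in at least k closed balls of radius t centered at points of A equals (1/vol(U)) · Σ_{a∈M} vol(Z_k(a;A) ∩ B(t,a)), where Z_k(a;A) is the k-th Brillouin zone of a. -/

import Mathlib

open MeasureTheory Set Metric Pointwise

noncomputable section

/-- 3-dimensional Euclidean space. -/
abbrev E3 := EuclideanSpace ℝ (Fin 3)

/-- The lattice generated by the vectors `b 0, b 1, b 2`. -/
def lat (b : Fin 3 → E3) : Set E3 := {x | ∃ n : Fin 3 → ℤ, x = ∑ i, (n i : ℝ) • b i}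

/-- The unit cell spanned by the vectors `b 0, b 1, b 2`. -/
def cell (b : Fin 3 → E3) : Set E3 :=
  {x | ∃ c : Fin 3 → ℝ, (∀ i, 0 ≤ c i ∧ c i < 1) ∧ x = ∑ i, c i • b i}

/-- The `k`-fold cover: points lying in at least `k` closed balls of radius `t`
centered at points of `A`. -/
def coverGE (A : Set E3) (t : ℝ) (k : ℕ) : Set E3 :=
  {x | ∃ F : Finset E3, F.card = k ∧ ↑F ⊆ A ∧ ∀ a ∈ F, dist x a ≤ t}

/-- Points lying in exactly `k` closed balls of radius `t` centered at points of `A`. -/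
def coverEQ (A : Set E3) (t : ℝ) (k : ℕ) : Set E3 :=
  {x | ∃ F : Finset E3, ↑F = {a ∈ A | dist x a ≤ t} ∧ F.card = k}

/-- The `k`-th Dirichlet–Voronoi domain of `a` in `A` (with `D_0 = ∅`). -/
def DV (A : Set E3) (a : E3) : ℕ → Set E3
  | 0 => ∅
  | (k+1) => {x | ({b ∈ A | dist x b < dist x a}).ncard ≤ k}

/-- The `k`-th Brillouin zone of `a` in `A`. -/
def BZ (A : Set E3) (a : E3) (k : ℕ) : Set E3 := DV A a k \ DV A a (k-1)

/-!
Off the null set of points equidistant from two distinct points of `A` (a countable union of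
planes), the distances from `x` to the points of `A` are pairwise distinct. For such `x`, lying in
at least `k` balls means that the `k`-th nearest point `c` of `A` satisfies `‖x - c‖ ≤ t`, and `c`
is the only point of `A` with `x ∈ Z_k(c; A)`. Hence the `k`-fold cover agrees a.e. with the
a.e.-disjoint union of the sets `Z_k(c; A) ∩ B(t, c)`, `c ∈ A`. Writing each `c` uniquely as
`v + a` with `a ∈ M ⊆ U` and `v ∈ Λ`, these sets are the `Λ`-translates of the sets
`Z_k(a; A) ∩ B(t, a)`, `a ∈ M`, and the translates of a set meet the fundamental domain `U` in
total measure equal to the measure of that set.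
-/

open Bornology

theorem Set.exists_mem_ncard_setOf_lt_eq {β α : Type*} [LinearOrder α] {s : Set β}
    (hs : s.Finite) {f : β → α} (hf : InjOn f s) {m : ℕ} (hm : m < s.ncard) :
    ∃ c ∈ s, {b ∈ s | f b < f c}.ncard = m := by
  set rank : ∀ c ∈ s, ℕ := fun c _ => {b ∈ s | f b < f c}.ncard
  have rank_lt : ∀ c (hc : c ∈ s), rank c hc ∈ Iio s.ncard := fun c hc =>
    ncard_lt_ncard ⟨sep_subset _ _, fun h => (h hc).2.false⟩ hs
  have rank_strictMono :
      ∀ c c' (hc : c ∈ s) (hc' : c' ∈ s), f c < f c' → rank c hc < rank c' hc' :=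
    fun c c' hc hc' hlt => ncard_lt_ncard
      ⟨fun b hb => ⟨hb.1, hb.2.trans hlt⟩, fun h => (h ⟨hc, hlt⟩).2.false⟩ (hs.sep _)
  have rank_inj : ∀ c c' hc hc', rank c hc = rank c' hc' → c = c' := by
    intro c c' hc hc' h
    by_contra hne
    rcases (hf.ne hc hc' hne).lt_or_gt with hlt | hlt
    · exact (rank_strictMono c c' hc hc' hlt).ne h
    · exact (rank_strictMono c' c hc' hc hlt).ne' h
  obtain ⟨c, hc, h⟩ := surj_on_of_inj_on_of_ncard_le rank rank_lt rank_inj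
    (by simp) (finite_Iio _) m hm
  exact ⟨c, hc, h.symm⟩

theorem MeasureTheory.IsAddFundamentalDomain.measure_inter_iUnion_vadd {G α ι : Type*}
    [AddGroup G] [Countable G] [AddAction G α] [MeasurableSpace α] {μ : Measure α}
    [MeasurableConstVAdd G α] [VAddInvariantMeasure G α μ] [Countable ι]
    {F : Set α} (hF : IsAddFundamentalDomain G F μ) {S : ι → Set α}
    (hS : ∀ i, NullMeasurableSet (S i) μ)
    (hd : Pairwise (Function.onFun (AEDisjoint μ) fun p : ι × G => p.2 +ᵥ S p.1)) :
    μ (F ∩ ⋃ p : ι × G, p.2 +ᵥ S p.1) = ∑' i, μ (S i) := by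
  rw [inter_iUnion, measure_iUnion₀ (fun p q hpq => (hd hpq).mono inter_subset_right
      inter_subset_right) fun p => hF.nullMeasurableSet.inter ((hS p.1).vadd p.2),
    ENNReal.tsum_prod (f := fun i (g : G) => μ (F ∩ (g +ᵥ S i)))]
  refine tsum_congr fun i => ?_
  simp only [hF.measure_eq_tsum (S i), inter_comm]

theorem measure_setOf_dist_eq_dist {E : Type*} [NormedAddCommGroup E] [InnerProductSpace ℝ E]
    [MeasurableSpace E] [BorelSpace E] [FiniteDimensional ℝ E] (μ : Measure E)
    [μ.IsAddHaarMeasure] {p q : E} (hpq : p ≠ q) :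
    μ {x | dist x p = dist x q} = 0 := by
  have hbis : {x | dist x p = dist x q} = AffineSubspace.perpBisector p q := by
    ext x; exact AffineSubspace.mem_perpBisector_iff_dist_eq.symm
  rw [hbis]
  refine Measure.addHaar_affineSubspace μ _ fun htop => hpq ?_
  have hp : p ∈ AffineSubspace.perpBisector p q := htop ▸ AffineSubspace.mem_top _ _ _
  simpa using AffineSubspace.mem_perpBisector_iff_dist_eq.mp hp

theorem ae_injOn_dist {E : Type*} [NormedAddCommGroup E] [InnerProductSpace ℝ E]
    [MeasurableSpace E] [BorelSpace E] [FiniteDimensional ℝ E] (μ : Measure E)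
    [μ.IsAddHaarMeasure] {A : Set E} (hA : A.Countable) :
    ∀ᵐ x ∂μ, InjOn (dist x) A := by
  have : {x | ¬InjOn (dist x) A} ⊆ ⋃ p ∈ A, ⋃ q ∈ A, ⋃ (_ : p ≠ q), {x | dist x p = dist x q} := by
    intro x hx
    simp only [InjOn, not_forall] at hx
    obtain ⟨p, hp, q, hq, heq, hne⟩ := hx
    exact mem_biUnion hp (mem_biUnion hq (mem_iUnion_of_mem hne heq))
  refine measure_mono_null this ((measure_biUnion_null_iff hA).2 fun p _ =>
    (measure_biUnion_null_iff hA).2 fun q _ => measure_iUnion_null fun hpq => ?_)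
  exact measure_setOf_dist_eq_dist μ hpq

theorem Set.Finite.add_inter_isBounded {E : Type*} [SeminormedAddCommGroup E] {M Λ : Set E}
    (hM : M.Finite) (hΛ : ∀ s, IsBounded s → (s ∩ Λ).Finite) {s : Set E}
    (hs : IsBounded s) : ((M + Λ) ∩ s).Finite := by
  refine (hM.add (inter_comm Λ _ ▸ hΛ (s - M) (hs.sub hM.isBounded))).subset ?_
  rintro x ⟨⟨a, ha, v, hv, rfl⟩, hxs⟩
  exact ⟨a, ha, v, mem_inter hv (mem_sub.2 ⟨a + v, hxs, a, ha, add_sub_cancel_left a v⟩), rfl⟩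

theorem countable_of_finite_inter_isBounded {E : Type*} [SeminormedAddCommGroup E] {A : Set E}
    (hA : ∀ s, IsBounded s → (A ∩ s).Finite) : A.Countable := by
  refine (countable_iUnion fun n : ℕ => (hA (closedBall 0 n) isBounded_closedBall).countable).mono
    fun a ha => ?_
  exact mem_iUnion.2 ⟨⌈‖a‖⌉₊, ha, mem_closedBall_zero_iff.2 (Nat.le_ceil _)⟩

theorem ZSpan.injective_add_of_subset_fundamentalDomain {E ι : Type*} [NormedAddCommGroup E]
    [NormedSpace ℝ E] [Fintype ι] (B : Module.Basis ι ℝ E) {M : Set E}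
    (hM : M ⊆ fundamentalDomain B) :
    Function.Injective fun p : M × (Submodule.span ℤ (range B)).toAddSubgroup =>
      (p.2 : E) + p.1 := by
  rintro ⟨⟨a, ha⟩, v, hv⟩ ⟨⟨a', ha'⟩, v', hv'⟩ (h : v + a = v' + a')
  have haa' : a = a' := by
    rw [← fract_eq_self.2 (hM ha), ← fract_eq_self.2 (hM ha'), ← fract_zSpan_add B a hv, h,
      fract_zSpan_add B a' hv']
  subst haa'
  simpa using h

theorem add_addSubgroup_eq_range {G : Type*} [AddCommGroup G] (M : Set G) (S : AddSubgroup G) :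
    M + (S : Set G) = range fun p : M × S => (p.2 : G) + p.1 := by
  ext c
  constructor
  · rintro ⟨a, ha, v, hv, rfl⟩
    exact ⟨(⟨a, ha⟩, ⟨v, hv⟩), add_comm v a⟩
  · rintro ⟨⟨⟨a, ha⟩, v, hv⟩, rfl⟩
    exact ⟨a, ha, v, hv, add_comm a v⟩

theorem vadd_add_addSubgroup_eq {G : Type*} [AddCommGroup G] {S : AddSubgroup G} (M : Set G)
    {v : G} (hv : v ∈ S) : v +ᵥ (M + (S : Set G)) = M + S := by
  rw [add_comm, ← vadd_add_assoc, vadd_coe_set hv]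

theorem finite_setOf_dist_lt {A : Set E3} (hA : ∀ s : Set E3, IsBounded s → (A ∩ s).Finite)
    (x : E3) (r : ℝ) : {b ∈ A | dist x b < r}.Finite :=
  (hA _ (isBounded_ball (x := x) (r := r))).subset fun _ hb => ⟨hb.1, mem_ball'.2 hb.2⟩

theorem mem_BZ_succ_iff {A : Set E3} {a x : E3} {m : ℕ} :
    x ∈ BZ A a (m + 1) ↔ {b ∈ A | dist x b < dist x a}.ncard = m := by
  rcases m with _ | m
  · simp [BZ, DV]
  · simp only [BZ, DV, mem_sdiff, mem_ofPred_eq, Nat.add_sub_cancel]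
    omega

theorem isClosed_DV {A : Set E3} (hA : ∀ s : Set E3, IsBounded s → (A ∩ s).Finite)
    (a : E3) : ∀ k, IsClosed (DV A a k)
  | 0 => isClosed_empty
  | k + 1 => by
    refine isOpen_compl_iff.1 (isOpen_iff_mem_nhds.2 fun x hx => ?_)
    simp only [mem_compl_iff, DV, mem_ofPred_eq, not_le] at hx
    obtain ⟨F, hFsub, hFcard⟩ := exists_subset_card_eq hx
    have hopen : IsOpen (⋂ b ∈ F, {y : E3 | dist y b < dist y a}) :=
      ((finite_setOf_dist_lt hA x _).subset hFsub).isOpen_biInter fun _ _ =>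
        isOpen_lt (continuous_id.dist continuous_const) (continuous_id.dist continuous_const)
    refine Filter.mem_of_superset (hopen.mem_nhds (mem_iInter₂.2 fun b hb => (hFsub hb).2))
      fun y hy => ?_
    simp only [mem_compl_iff, DV, mem_ofPred_eq, not_le]
    calc k < F.ncard := by omega
      _ ≤ {b ∈ A | dist y b < dist y a}.ncard :=
        ncard_le_ncard (fun b hb => ⟨(hFsub hb).1, mem_iInter₂.1 hy b hb⟩)
          (finite_setOf_dist_lt hA y _)

theorem measurableSet_BZ_inter_closedBall {A : Set E3}
    (hA : ∀ s : Set E3, IsBounded s → (A ∩ s).Finite) (a : E3) (k : ℕ) (t : ℝ) :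
    MeasurableSet (BZ A a k ∩ closedBall a t) :=
  ((isClosed_DV hA a k).measurableSet.diff (isClosed_DV hA a _).measurableSet).inter
    measurableSet_closedBall

theorem mem_coverGE_of_mem_BZ {A : Set E3}
    (hA : ∀ s : Set E3, IsBounded s → (A ∩ s).Finite) {m : ℕ} {t : ℝ} {x c : E3}
    (hc : c ∈ A) (hx : x ∈ BZ A c (m + 1)) (hxc : dist x c ≤ t) : x ∈ coverGE A t (m + 1) := by
  classical
  have hfin := finite_setOf_dist_lt hA x (dist x c)
  refine ⟨insert c hfin.toFinset, ?_, ?_, ?_⟩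
  · rw [Finset.card_insert_of_notMem (by simp), ← ncard_eq_toFinset_card _ hfin,
      mem_BZ_succ_iff.1 hx]
  · rw [Finset.coe_insert, hfin.coe_toFinset]
    exact insert_subset hc (sep_subset _ _)
  · rw [Finset.forall_mem_insert]
    exact ⟨hxc, fun b hb => (hfin.mem_toFinset.1 hb).2.le.trans hxc⟩

theorem exists_mem_BZ_of_mem_coverGE {A : Set E3}
    (hA : ∀ s : Set E3, IsBounded s → (A ∩ s).Finite) {m : ℕ} {t : ℝ} {x : E3}
    (hinj : InjOn (dist x) A) (hx : x ∈ coverGE A t (m + 1)) :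
    ∃ c ∈ A, x ∈ BZ A c (m + 1) ∧ dist x c ≤ t := by
  obtain ⟨F, hFcard, hFA, hFt⟩ := hx
  have hS : (A ∩ closedBall x t).Finite := hA _ isBounded_closedBall
  have hmS : m < (A ∩ closedBall x t).ncard :=
    calc m < (F : Set E3).ncard := by rw [ncard_coe_finset]; omega
      _ ≤ _ := ncard_le_ncard (subset_inter hFA fun b hb => mem_closedBall'.2 (hFt b hb)) hS
  obtain ⟨c, ⟨hcA, hct⟩, hc⟩ := exists_mem_ncard_setOf_lt_eq hS (hinj.mono inter_subset_left) hmS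
  refine ⟨c, hcA, mem_BZ_succ_iff.2 (Eq.trans (congrArg ncard ?_) hc), mem_closedBall'.1 hct⟩
  ext b
  simp only [mem_sep_iff, mem_inter_iff]
  exact and_congr_left fun h =>
    (and_iff_left (mem_closedBall'.2 (h.le.trans (mem_closedBall'.1 hct)))).symm

theorem ncard_setOf_dist_lt_lt {A : Set E3}
    (hA : ∀ s : Set E3, IsBounded s → (A ∩ s).Finite) {x c c' : E3} (hc : c ∈ A)
    (hlt : dist x c < dist x c') :
    {b ∈ A | dist x b < dist x c}.ncard < {b ∈ A | dist x b < dist x c'}.ncard :=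
  ncard_lt_ncard ⟨fun _ hb => ⟨hb.1, hb.2.trans hlt⟩, fun h => (h ⟨hc, hlt⟩).2.false⟩
    (finite_setOf_dist_lt hA x _)

theorem eq_of_mem_BZ_of_mem_BZ {A : Set E3}
    (hA : ∀ s : Set E3, IsBounded s → (A ∩ s).Finite) {m : ℕ} {x c c' : E3}
    (hinj : InjOn (dist x) A) (hc : c ∈ A) (hc' : c' ∈ A) (hxc : x ∈ BZ A c (m + 1))
    (hxc' : x ∈ BZ A c' (m + 1)) : c = c' := by
  rw [mem_BZ_succ_iff] at hxc hxc'
  by_contra hne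
  rcases (hinj.ne hc hc' hne).lt_or_gt with hlt | hlt
  · exact (ncard_setOf_dist_lt_lt hA hc hlt).ne (hxc.trans hxc'.symm)
  · exact (ncard_setOf_dist_lt_lt hA hc' hlt).ne (hxc'.trans hxc.symm)

theorem coverGE_ae_eq_biUnion {A : Set E3}
    (hA : ∀ s : Set E3, IsBounded s → (A ∩ s).Finite) (m : ℕ) (t : ℝ) :
    coverGE A t (m + 1) =ᵐ[volume] ⋃ c ∈ A, BZ A c (m + 1) ∩ closedBall c t := by
  refine Filter.eventuallyEq_set.2 ?_
  filter_upwards [ae_injOn_dist volume (countable_of_finite_inter_isBounded hA)] with x hinj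
  simp only [mem_iUnion₂, mem_inter_iff, mem_closedBall, exists_prop]
  exact ⟨exists_mem_BZ_of_mem_coverGE hA hinj,
    fun ⟨_, hc, hx, hxc⟩ => mem_coverGE_of_mem_BZ hA hc hx hxc⟩

theorem aedisjoint_BZ {A : Set E3} (hA : ∀ s : Set E3, IsBounded s → (A ∩ s).Finite)
    {m : ℕ} {c c' : E3} (hc : c ∈ A) (hc' : c' ∈ A) (hne : c ≠ c') :
    AEDisjoint volume (BZ A c (m + 1)) (BZ A c' (m + 1)) :=
  measure_mono_null (fun _ hx hinj => hne (eq_of_mem_BZ_of_mem_BZ hA hinj hc hc' hx.1 hx.2))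
    (ae_iff.1 (ae_injOn_dist volume (countable_of_finite_inter_isBounded hA)))

theorem DV_image_isometryEquiv (φ : E3 ≃ᵢ E3) (A : Set E3) (a : E3) :
    ∀ k, DV (φ '' A) (φ a) k = φ '' DV A a k
  | 0 => (image_empty φ).symm
  | k + 1 => by
    ext x
    obtain ⟨y, rfl⟩ := φ.surjective x
    have hcloser : {b ∈ φ '' A | dist (φ y) b < dist (φ y) (φ a)} =
        φ '' {b ∈ A | dist y b < dist y a} := by
      ext b
      obtain ⟨b, rfl⟩ := φ.surjective b
      simp [φ.injective.mem_set_image, φ.dist_eq]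
    simp only [DV, mem_ofPred_eq, φ.injective.mem_set_image, hcloser,
      ncard_image_of_injective _ φ.injective]

theorem BZ_inter_closedBall_vadd {A : Set E3} {v : E3} (hv : v +ᵥ A = A) (a : E3) (k : ℕ)
    (t : ℝ) : BZ A (v +ᵥ a) k ∩ closedBall (v +ᵥ a) t = v +ᵥ (BZ A a k ∩ closedBall a t) := by
  have h := DV_image_isometryEquiv (IsometryEquiv.constVAdd (X := E3) v) A a
  simp only [IsometryEquiv.constVAdd_apply, image_vadd, hv] at h
  simp only [BZ, h, vadd_set_sdiff, vadd_set_inter, vadd_closedBall]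

theorem lat_eq_span (B : Module.Basis (Fin 3) ℝ E3) :
    lat B = Submodule.span ℤ (range B) := by
  ext x
  simp only [lat, mem_ofPred_eq, SetLike.mem_coe, Submodule.mem_span_range_iff_exists_fun,
    ← Int.cast_smul_eq_zsmul ℝ, eq_comm]

theorem cell_eq_fundamentalDomain (B : Module.Basis (Fin 3) ℝ E3) :
    cell B = ZSpan.fundamentalDomain B := by
  ext x
  refine ⟨?_, fun hx => ⟨fun i => B.repr x i, hx, (B.sum_repr x).symm⟩⟩
  rintro ⟨c, hc, rfl⟩
  refine (ZSpan.mem_fundamentalDomain B).2 fun i => ?_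
  rw [B.repr_sum_self]
  exact hc i

theorem volume_cell_inter_coverGE (B : Module.Basis (Fin 3) ℝ E3) {M : Finset E3}
    (hM : ↑M ⊆ cell B) (m : ℕ) (t : ℝ) :
    volume (cell B ∩ coverGE (↑M + lat B) t (m + 1)) =
      ∑ a ∈ M, volume (BZ (↑M + lat B) a (m + 1) ∩ closedBall a t) := by
  rw [lat_eq_span, cell_eq_fundamentalDomain] at *
  set L := (Submodule.span ℤ (range B)).toAddSubgroup
  have : Countable L := inferInstanceAs (Countable (Submodule.span ℤ (range B)))
  set A := (M : Set E3) + (L : Set E3)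
  set T := fun a => BZ A a (m + 1) ∩ closedBall a t
  have hA : ∀ s : Set E3, IsBounded s → (A ∩ s).Finite := fun _ =>
    M.finite_toSet.add_inter_isBounded fun _ => ZSpan.setFinite_inter B
  have hArange : A = range fun p : M × L => (p.2 : E3) + p.1 := add_addSubgroup_eq_range _ _
  have hT : ∀ p : M × L, T ((p.2 : E3) + p.1) = p.2 +ᵥ T p.1 := fun p =>
    BZ_inter_closedBall_vadd (vadd_add_addSubgroup_eq _ p.2.2) _ _ _
  have hdisj : Pairwise (Function.onFun (AEDisjoint volume) fun p : M × L => p.2 +ᵥ T p.1) := by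
    intro p q hpq
    simp only [Function.onFun, ← hT]
    exact (aedisjoint_BZ hA (hArange ▸ mem_range_self p) (hArange ▸ mem_range_self q)
      ((ZSpan.injective_add_of_subset_fundamentalDomain B hM).ne hpq)).mono
      inter_subset_left inter_subset_left
  have hunion : ⋃ c ∈ A, T c = ⋃ p : M × L, p.2 +ᵥ T p.1 := by
    rw [hArange, biUnion_range]
    exact iUnion_congr hT
  have hcover : coverGE A t (m + 1) =ᵐ[volume] ⋃ p : M × L, p.2 +ᵥ T p.1 := by
    rw [← hunion]
    exact coverGE_ae_eq_biUnion hA m t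
  calc volume (ZSpan.fundamentalDomain B ∩ coverGE A t (m + 1))
      = volume (ZSpan.fundamentalDomain B ∩ ⋃ p : M × L, p.2 +ᵥ T p.1) :=
        measure_congr ((Filter.EventuallyEq.refl _ _).inter hcover)
    _ = ∑' a : M, volume (T a) :=
        (ZSpan.isAddFundamentalDomain' B volume).measure_inter_iUnion_vadd
          (fun a : M => (measurableSet_BZ_inter_closedBall hA (a : E3) _ t).nullMeasurableSet) hdisj
    _ = ∑ a ∈ M, volume (T a) := by
        rw [tsum_fintype]
        exact Finset.sum_coe_sort M fun a => volume (T a)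

theorem density_for_periodic_set_general (b : Fin 3 → E3) (hb : LinearIndependent ℝ b)
    (M : Finset E3) (hM : ↑M ⊆ cell b)
    (A : Set E3) (hA : A = ↑M + lat b)
    (k : ℕ) (hk : 1 ≤ k) (t : ℝ) :
    volume (cell b ∩ coverGE A t k) =
      ∑ a ∈ M, volume (BZ A a k ∩ closedBall a t) := by
  let B : Module.Basis (Fin 3) ℝ E3 :=
    basisOfLinearIndependentOfCardEqFinrank hb (by simp)
  have hB : ⇑B = b := coe_basisOfLinearIndependentOfCardEqFinrank hb _
  obtain ⟨m, rfl⟩ : ∃ m, k = m + 1 := ⟨k - 1, by omega⟩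
  subst hA
  rw [← hB] at hM ⊢
  exact volume_cell_inter_coverGE B hM m t

theorem density_for_periodic_set (b : Fin 3 → E3) (hb : LinearIndependent ℝ b)
    (M : Finset E3) (hM : ↑M ⊆ cell b)
    (A : Set E3) (hA : A = ↑M + lat b)
    (k : ℕ) (hk : 1 ≤ k) (t : ℝ) (ht : 0 ≤ t) :
    volume (cell b ∩ coverGE A t k) =
      ∑ a ∈ M, volume (BZ A a k ∩ closedBall a t) :=
  density_for_periodic_set_general b hb M hM A hA k hk t
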